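/- Suppose π is an (s,k)-clash-free permutation of Z_n with n = sk + r, 1 ≤ r < s, r < k. For every i ∈ Z_n there exists exactly one j ∈ Z_n such that the rectangle R_j touches the top edge of R_i; that is, there is exactly one j with π(j) = π(i) + k mod n and ||i,j||_n < s. -/

import Mathlib

/-!
Let `j = π⁻¹(π i + k)` and suppose `‖i,j‖ ≥ s`. The preimages `p_c = π⁻¹(π i + c)`, `0 ≤ c ≤ k`,
are then pairwise at distance at least `s`: for `(c, c') = (0, k)` this is the assumption, and
otherwise `0 < c' - c < k`, so clash-freeness forbids `p_c` and `p_{c'}` from being close. But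
`k + 1` points pairwise at distance `≥ s` on a cycle of length `n` need `(k + 1) s ≤ n = s k + r`,
contradicting `r < s`.
-/

/-- The circular (Lee) distance between two elements of `ZMod n`. -/
def circDist (n : ℕ) (i j : ZMod n) : ℕ := min (i - j).val (j - i).val

/-- A permutation of `ZMod n` is `(s,k)`-clash-free if it moves every pair of
distinct elements at distance less than `s` to a pair at distance at least `k`. -/
def ClashFree (n s k : ℕ) (π : Equiv.Perm (ZMod n)) : Prop :=
  ∀ i j : ZMod n, i ≠ j → circDist n i j < s → k ≤ circDist n (π i) (π j)

section circDist

variable {n : ℕ}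

lemma circDist_comm (i j : ZMod n) : circDist n i j = circDist n j i := by
  rw [circDist, circDist, min_comm]

lemma circDist_add_natCast_le (a : ZMod n) (t : ℕ) : circDist n a (a + t) ≤ t :=
  calc circDist n a (a + t) ≤ (a + t - a).val := min_le_right _ _
    _ = t % n := by rw [add_sub_cancel_left, ZMod.val_natCast]
    _ ≤ t := Nat.mod_le t n

lemma circDist_le_of_add_natCast_eq {p q : ZMod n} {t u : ℕ} (h : p + t = q + u) (htu : t ≤ u) :
    circDist n p q ≤ u - t := by
  have hp : q + ((u - t : ℕ) : ZMod n) = p := by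
    rw [Nat.cast_sub htu]; linear_combination -h
  rw [circDist_comm, ← hp]
  exact circDist_add_natCast_le q (u - t)

/-- Disjoint arcs of length `s` starting at the points: `(a, t) ↦ p a + t` is injective. -/
theorem card_mul_le_of_pairwise_le_circDist [NeZero n] {s : ℕ} (hs : s ≤ n)
    {ι : Type*} [Fintype ι] (p : ι → ZMod n)
    (hp : Pairwise fun a b => s ≤ circDist n (p a) (p b)) :
    Fintype.card ι * s ≤ n := by
  have hinj : Function.Injective fun x : ι × Fin s => p x.1 + (x.2 : ℕ) := by
    rintro ⟨a, t⟩ ⟨b, u⟩ h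
    simp only at h
    obtain rfl : a = b := by
      by_contra hab
      have hfar := hp hab
      rcases le_total (t : ℕ) u with htu | hut
      · have := circDist_le_of_add_natCast_eq h htu
        omega
      · have := circDist_le_of_add_natCast_eq h.symm hut
        rw [circDist_comm] at this
        omega
    have htu : ((t : ℕ) : ZMod n) = (u : ℕ) := add_left_cancel h
    rw [ZMod.natCast_eq_natCast_iff', Nat.mod_eq_of_lt (by omega),
      Nat.mod_eq_of_lt (by omega)] at htu
    simp [Fin.ext htu]
  simpa using Fintype.card_le_of_injective _ hinj

end circDist

namespace ClashFree

variable {n s k : ℕ} {π : Equiv.Perm (ZMod n)}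

lemma le_circDist_symm_add (hcf : ClashFree n s k π) (a : ZMod n) {t : ℕ}
    (ht : (t : ZMod n) ≠ 0) (htk : t < k) : s ≤ circDist n (π.symm a) (π.symm (a + t)) := by
  by_contra hclose
  have hne : π.symm a ≠ π.symm (a + t) := fun h =>
    ht (add_eq_left.mp (π.symm.injective h).symm)
  have := hcf _ _ hne (not_le.mp hclose)
  simp only [Equiv.apply_symm_apply] at this
  have := circDist_add_natCast_le a t
  omega

theorem circDist_symm_add_lt [NeZero n] (hcf : ClashFree n s k π) (hs : s ≤ n) (hkn : k < n)
    (hnks : n < (k + 1) * s) (i : ZMod n) : circDist n i (π.symm (π i + k)) < s := by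
  by_contra hfar
  set p : Fin (k + 1) → ZMod n := fun c => π.symm (π i + (c : ℕ))
  have hlt : ∀ a b : Fin (k + 1), a < b → s ≤ circDist n (p a) (p b) := by
    intro a b hab
    by_cases hend : (a : ℕ) = 0 ∧ (b : ℕ) = k
    · simpa [p, hend] using hfar
    have hpb : p b = π.symm (π i + (a : ℕ) + ((b - a : ℕ) : ZMod n)) := by
      rw [Nat.cast_sub hab.le, add_add_sub_cancel]
    rw [hpb]
    refine hcf.le_circDist_symm_add _ ?_ (by omega)
    rw [Ne, ZMod.natCast_eq_zero_iff]
    exact fun hdvd => absurd (Nat.le_of_dvd (by omega) hdvd) (by omega)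
  have hpair : Pairwise fun a b => s ≤ circDist n (p a) (p b) := fun a b hab =>
    (lt_or_gt_of_ne hab).elim (hlt a b) fun h => (hlt b a h).trans_eq (circDist_comm _ _)
  have := card_mul_le_of_pairwise_le_circDist hs p hpair
  rw [Fintype.card_fin] at this
  omega

end ClashFree

theorem stmt_4_general (n s k r : ℕ) (hk : 0 < k)
    (hn : n = s * k + r) (hr1 : 1 ≤ r) (hrs : r < s)
    (π : Equiv.Perm (ZMod n)) (hcf : ClashFree n s k π) :
    ∀ i : ZMod n, ∃! j : ZMod n,
      π j = π i + (k : ZMod n) ∧ circDist n i j < s := by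
  have hks : k ≤ s * k := Nat.le_mul_of_pos_left k (by omega)
  have hsk : s ≤ s * k := Nat.le_mul_of_pos_right s hk
  have : NeZero n := ⟨by omega⟩
  have hnks : n < (k + 1) * s := by rw [hn, add_one_mul, mul_comm k]; omega
  intro i
  refine ⟨π.symm (π i + k), ⟨π.apply_symm_apply _, ?_⟩, fun j hj => π.eq_symm_apply.mpr hj.1⟩
  exact hcf.circDist_symm_add_lt (by omega) (by omega) hnks i

/-- Exactly one rectangle touches the top edge of each rectangle: for each `i`
there is exactly one `j` with `π j = π i + k` and `‖i,j‖ < s`. -/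
theorem stmt_4 (n s k r : ℕ) (hk : 0 < k)
    (hn : n = s * k + r) (hr1 : 1 ≤ r) (hrs : r < s) (hrk : r < k)
    (π : Equiv.Perm (ZMod n)) (hcf : ClashFree n s k π) :
    ∀ i : ZMod n, ∃! j : ZMod n,
      π j = π i + (k : ZMod n) ∧ circDist n i j < s :=
  stmt_4_general n s k r hk hn hr1 hrs π hcf
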